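/- arXiv:math/0406024 — 4 statements merged into one kernel-verified Lean document; each statement's English description precedes it below -/
import Mathlib

section
/- For a distribution D on the path with root a leaf r, define the weight w(D) = Σ_v D(v)/2^{dist(v,r)}. Then D is r-unsolvable if and only if w(D) < 1. -/
/-!
A pebbling step along an edge `u → v` changes the weight by
`2^{-d(v)} - 2·2^{-d(u)} ≤ 0`, since `d(u) ≤ d(v) + 1`; so the weight never increases, and a
distribution with a pebble on `r` has weight at least `1`.

Conversely, rooted at a leaf of the path, the distribution with one pebble on every vertex
has weight `2 - 2^{-n} < 2`. So if `r` is empty and the weight is at least `1`, some vertex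
holds two pebbles; moving one of them a step towards `r` keeps the weight and lowers
`∑ D(v)·d(v)`, and induction on that potential puts a pebble on `r`.
-/

/-- A single pebbling step: remove two pebbles from `u` and place one on an adjacent `v`. -/
def PebStep {V : Type*} [DecidableEq V] (G : SimpleGraph V) (D D' : V → ℕ) : Prop :=
  ∃ u v : V, G.Adj u v ∧ 2 ≤ D u ∧
    D' = Function.update (Function.update D u (D u - 2)) v (D v + 1)

/-- `D` is `r`-solvable: some sequence of pebbling steps places a pebble on `r`. -/
def PebSolvable {V : Type*} [DecidableEq V] (G : SimpleGraph V) (D : V → ℕ) (r : V) : Prop :=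
  ∃ D' : V → ℕ, Relation.ReflTransGen (PebStep G) D D' ∧ 1 ≤ D' r

/-- The pebbling number of `G`: the least `t` such that every distribution of size `t`
is `r`-solvable for every root `r`. -/
noncomputable def pebblingNumber (V : Type*) [Fintype V] [DecidableEq V] (G : SimpleGraph V) : ℕ :=
  sInf {t : ℕ | ∀ D : V → ℕ, ∀ r : V, (∑ v, D v) = t → PebSolvable G D r}

open SimpleGraph Finset Function

namespace SimpleGraph

variable {V : Type*} {G : SimpleGraph V} {u v r : V}

lemma Adj.dist_le_dist_add_one (h : G.Adj u v) (r : V) : G.dist u r ≤ G.dist v r + 1 := by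
  rw [dist_comm, dist_comm (u := v)]
  rcases h.symm.diff_dist_adj (u := r) with h' | h' | h' <;> omega

lemma Reachable.exists_adj_dist_add_one_eq (hvr : G.Reachable v r) (hne : v ≠ r) :
    ∃ u, G.Adj v u ∧ G.dist u r + 1 = G.dist v r := by
  obtain ⟨p, hp⟩ := hvr.exists_walk_length_eq_dist
  cases p with
  | nil => exact absurd rfl hne
  | cons hadj q =>
    refine ⟨_, hadj, le_antisymm ?_ (hadj.dist_le_dist_add_one r)⟩
    rw [← hp, Walk.length_cons]
    exact Nat.succ_le_succ (dist_le q)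

lemma natDist_le_length_of_walk_pathGraph {n : ℕ} {i j : Fin n} (p : (pathGraph n).Walk i j) :
    Nat.dist i j ≤ p.length := by
  induction p with
  | nil => simp
  | cons hadj _ ih =>
    rw [pathGraph_adj] at hadj
    simp only [Nat.dist, Walk.length_cons] at ih ⊢
    omega

lemma pathGraph_dist_le_natDist {n : ℕ} (i j : Fin n) : (pathGraph n).dist i j ≤ Nat.dist i j := by
  wlog hij : (i : ℕ) ≤ j generalizing i j
  · rw [dist_comm, Nat.dist_comm]
    exact this j i (by omega)
  obtain ⟨k, hk⟩ := Nat.exists_eq_add_of_le hij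
  rw [Nat.dist_eq_sub_of_le hij, hk, Nat.add_sub_cancel_left, dist_comm]
  induction k generalizing j with
  | zero => simp [Fin.ext hk.symm]
  | succ k ih =>
    have hlt : (i : ℕ) + k < n := by omega
    have hadj : (pathGraph n).Adj j ⟨i + k, hlt⟩ := by rw [pathGraph_adj]; simp; omega
    exact (hadj.dist_le_dist_add_one i).trans (by simpa using ih ⟨i + k, hlt⟩ (by simp) rfl)

lemma pathGraph_dist {n : ℕ} (i j : Fin n) : (pathGraph n).dist i j = Nat.dist i j := by
  refine le_antisymm (pathGraph_dist_le_natDist i j) ?_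
  obtain ⟨p, hp⟩ := (pathGraph_preconnected n i j).exists_walk_length_eq_dist
  exact hp ▸ natDist_le_length_of_walk_pathGraph p

lemma pathGraph_dist_zero {n : ℕ} (v : Fin (n + 1)) : (pathGraph (n + 1)).dist v 0 = v := by
  simp [pathGraph_dist, Nat.dist_zero_right]

lemma pathGraph_dist_last {n : ℕ} (v : Fin (n + 1)) :
    (pathGraph (n + 1)).dist v (Fin.last n) = Fin.rev v := by
  simp [pathGraph_dist, Nat.dist, Fin.val_rev]
  omega

end SimpleGraph

section Pebbling

variable {V : Type*} [Fintype V] [DecidableEq V] {G : SimpleGraph V} {r : V}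

lemma sum_cast_mul_update_update {R : Type*} [CommRing R] (c : V → R) {D : V → ℕ} {u v : V}
    (huv : u ≠ v) (h2 : 2 ≤ D u) :
    ∑ x, ((update (update D u (D u - 2)) v (D v + 1) x : ℕ) : R) * c x
      = ∑ x, (D x : R) * c x - 2 * c u + c v := by
  have hpt : ∀ x, ((update (update D u (D u - 2)) v (D v + 1) x : ℕ) : R) * c x
      = (D x : R) * c x - (if x = u then 2 * c u else 0) + (if x = v then c v else 0) := by
    intro x
    by_cases hxv : x = v
    · subst hxv; simp [Ne.symm huv]; ring
    by_cases hxu : x = u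
    · subst hxu; simp [hxv, Nat.cast_sub h2]; ring
    · simp [hxu, hxv]
  simp only [hpt, sum_add_distrib, sum_sub_distrib, sum_ite_eq']
  simp

noncomputable def pebblingWeight (G : SimpleGraph V) (r : V) (D : V → ℕ) : ℚ :=
  ∑ v, (D v : ℚ) / 2 ^ G.dist v r

noncomputable def pebblingPotential (G : SimpleGraph V) (r : V) (D : V → ℕ) : ℕ :=
  ∑ v, D v * G.dist v r

lemma pebblingWeight_update_update {D : V → ℕ} {u v : V} (huv : u ≠ v) (h2 : 2 ≤ D u) :
    pebblingWeight G r (update (update D u (D u - 2)) v (D v + 1))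
      = pebblingWeight G r D - 2 * ((2 : ℚ) ^ G.dist u r)⁻¹ + ((2 : ℚ) ^ G.dist v r)⁻¹ := by
  simp only [pebblingWeight, div_eq_mul_inv]
  exact sum_cast_mul_update_update _ huv h2

lemma pebblingWeight_le_of_pebStep {D D' : V → ℕ} (h : PebStep G D D') :
    pebblingWeight G r D' ≤ pebblingWeight G r D := by
  obtain ⟨u, v, hadj, h2, rfl⟩ := h
  rw [pebblingWeight_update_update hadj.ne h2, sub_add, sub_le_self_iff, sub_nonneg]
  calc ((2 : ℚ) ^ G.dist v r)⁻¹ = 2 * ((2 : ℚ) ^ (G.dist v r + 1))⁻¹ := by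
        rw [pow_succ, mul_inv, mul_comm, mul_assoc, inv_mul_cancel₀ two_ne_zero, mul_one]
    _ ≤ 2 * ((2 : ℚ) ^ G.dist u r)⁻¹ := by
        gcongr
        · norm_num
        · exact hadj.dist_le_dist_add_one r

lemma pebblingWeight_le_of_reflTransGen {D D' : V → ℕ}
    (h : Relation.ReflTransGen (PebStep G) D D') :
    pebblingWeight G r D' ≤ pebblingWeight G r D := by
  induction h with
  | refl => exact le_rfl
  | tail _ hstep ih => exact (pebblingWeight_le_of_pebStep hstep).trans ih

lemma one_le_pebblingWeight_of_pebSolvable {D : V → ℕ} (h : PebSolvable G D r) :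
    1 ≤ pebblingWeight G r D := by
  obtain ⟨D', hD', hr⟩ := h
  refine le_trans ?_ (pebblingWeight_le_of_reflTransGen hD')
  calc (1 : ℚ) ≤ (D' r : ℚ) / 2 ^ G.dist r r := by simpa using hr
    _ ≤ pebblingWeight G r D' :=
      single_le_sum (f := fun v ↦ (D' v : ℚ) / 2 ^ G.dist v r) (fun _ _ ↦ by positivity)
        (mem_univ r)

lemma exists_two_le_of_one_le_pebblingWeight (hsum : ∑ v, ((2 : ℚ) ^ G.dist v r)⁻¹ < 2)
    {D : V → ℕ} (hr : D r = 0) (hD : 1 ≤ pebblingWeight G r D) : ∃ v ≠ r, 2 ≤ D v := by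
  by_contra! hsmall
  have hpt : ∀ v, (D v : ℚ) * ((2 : ℚ) ^ G.dist v r)⁻¹ + (if v = r then 1 else 0)
      ≤ ((2 : ℚ) ^ G.dist v r)⁻¹ := by
    intro v
    by_cases hv : v = r
    · subst hv; simp [hr]
    · have : (D v : ℚ) ≤ 1 := by exact_mod_cast Nat.le_of_lt_succ (hsmall v hv)
      simpa [hv] using mul_le_of_le_one_left (b := ((2 : ℚ) ^ G.dist v r)⁻¹) (by positivity) this
  have := sum_le_sum fun v (_ : v ∈ univ) ↦ hpt v
  simp only [sum_add_distrib, sum_ite_eq', mem_univ, if_true, ← div_eq_mul_inv] at this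
  rw [pebblingWeight] at hD
  linarith

lemma exists_pebStep_of_two_le (hG : G.Preconnected) {D : V → ℕ} {v : V} (hv : v ≠ r)
    (h2 : 2 ≤ D v) : ∃ D', PebStep G D D' ∧ pebblingWeight G r D' = pebblingWeight G r D ∧
      pebblingPotential G r D' < pebblingPotential G r D := by
  obtain ⟨u, hadj, hu⟩ := (hG v r).exists_adj_dist_add_one_eq hv
  refine ⟨_, ⟨v, u, hadj, h2, rfl⟩, ?_, ?_⟩
  · rw [pebblingWeight_update_update hadj.ne h2, ← hu, pow_succ, mul_inv, sub_add,
      mul_comm, mul_assoc, inv_mul_cancel₀ two_ne_zero, mul_one, sub_self, sub_zero]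
  · have := sum_cast_mul_update_update (R := ℤ) (fun x ↦ (G.dist x r : ℤ)) hadj.ne h2
    simp only [← Nat.cast_mul, ← Nat.cast_sum] at this
    rw [pebblingPotential, pebblingPotential, ← Nat.cast_lt (α := ℤ), this]
    omega

lemma pebSolvable_of_one_le_pebblingWeight (hG : G.Preconnected)
    (hsum : ∑ v, ((2 : ℚ) ^ G.dist v r)⁻¹ < 2) (D : V → ℕ) (hD : 1 ≤ pebblingWeight G r D) :
    PebSolvable G D r := by
  induction hP : pebblingPotential G r D using Nat.strong_induction_on generalizing D with
  | _ P ih =>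
  by_cases hr : 1 ≤ D r
  · exact ⟨D, .refl, hr⟩
  obtain ⟨v, hv, h2⟩ := exists_two_le_of_one_le_pebblingWeight hsum (by omega) hD
  obtain ⟨D', hstep, hw, hpot⟩ := exists_pebStep_of_two_le hG hv h2
  obtain ⟨D'', hD'', hr''⟩ := ih _ (hP ▸ hpot) D' (hw ▸ hD) rfl
  exact ⟨D'', .head hstep hD'', hr''⟩

end Pebbling

lemma sum_inv_two_pow_pathGraph_dist_leaf_lt {n : ℕ} {r : Fin (n + 1)}
    (hr : r = 0 ∨ r = Fin.last n) : ∑ v, ((2 : ℚ) ^ (pathGraph (n + 1)).dist v r)⁻¹ < 2 := by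
  have hgeom : ∑ v : Fin (n + 1), (2⁻¹ : ℚ) ^ (v : ℕ) < 2 := by
    rw [Fin.sum_univ_eq_sum_range (fun i ↦ (2⁻¹ : ℚ) ^ i), geom_sum_eq (by norm_num)]
    have : (0 : ℚ) < 2⁻¹ ^ (n + 1) := by positivity
    rw [div_lt_iff_of_neg (by norm_num)]
    linarith
  rcases hr with rfl | rfl
  · simpa only [pathGraph_dist_zero, inv_pow] using hgeom
  · simpa only [pathGraph_dist_last, Fin.revPerm_apply, inv_pow] using
      (Equiv.sum_comp Fin.revPerm fun v ↦ (2⁻¹ : ℚ) ^ (v : ℕ)).trans_lt hgeom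

theorem path_weight_unsolvable (n : ℕ) (D : Fin (n + 1) → ℕ) (r : Fin (n + 1))
    (hr : r = 0 ∨ r = Fin.last n) :
    ¬ PebSolvable (SimpleGraph.pathGraph (n + 1)) D r ↔
      (∑ v, (D v : ℚ) / 2 ^ (SimpleGraph.pathGraph (n + 1)).dist v r) < 1 := by
  change _ ↔ pebblingWeight _ r D < 1
  refine ⟨fun hD ↦ not_le.mp fun hw ↦ hD ?_, fun hw hD ↦ ?_⟩
  · exact pebSolvable_of_one_le_pebblingWeight (pathGraph_preconnected _)
      (sum_inv_two_pow_pathGraph_dist_leaf_lt hr) D hw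
  · exact hw.not_ge (one_le_pebblingWeight_of_pebSolvable hD)
end

section
/- For k ≥ 1, the pebbling number of the even cycle C_{2k} equals 2^k. -/
/-!
Weight functions. For a root `r`, give the vertex at distance `j ≤ k` from `r` along either of
the two arcs of length `k` ending at `r` the weight `2 ^ (k - j)`. Each arc weight has total
`2 ^ k - 1` and is a strategy: a vertex of positive weight has a neighbour that is `r` or carries
twice its weight. Pebbling greedily toward such neighbours never lowers the weighted size, so any
distribution whose weighted size exceeds the total weight reaches `r`. Every vertex other than `r`
has combined weight at least `2`, so `2 ^ k` pebbles off `r` beat one of the two arcs.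

Conversely, `∑ 2 ^ d(x) D(x)`, with `d` the distance from the antipode of the root, cannot increase
under a pebbling step; fewer than `2 ^ k` pebbles on the antipode have potential below `2 ^ k`,
which is the potential of a single pebble on the root.
-/

open Finset Function Relation SimpleGraph

theorem exists_ne_zero_two_le_of_sum_lt_sum_mul {V : Type*} [Fintype V] {w D : V → ℕ}
    (h : ∑ x, w x < ∑ x, w x * D x) : ∃ v, w v ≠ 0 ∧ 2 ≤ D v := by
  by_contra! hD
  refine h.not_ge (sum_le_sum fun x _ => ?_)
  rcases eq_or_ne (w x) 0 with hx | hx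
  · simp [hx]
  · simpa using Nat.mul_le_mul_left (w x) (Nat.le_of_lt_succ (hD x hx))

section Weights

variable {V : Type*} {G : SimpleGraph V}

def IsPebblingStrategy (G : SimpleGraph V) (r : V) (w : V → ℕ) : Prop :=
  ∀ v, w v ≠ 0 → ∃ u, G.Adj v u ∧ (u = r ∨ 2 * w v ≤ w u)

theorem IsPebblingStrategy.comp_iso {W : Type*} {H : SimpleGraph W} (φ : G ≃g H) {r : V}
    {w : W → ℕ} (hw : IsPebblingStrategy H (φ r) w) : IsPebblingStrategy G r (w ∘ φ) := by
  intro v hv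
  obtain ⟨u, hvu, hu⟩ := hw (φ v) hv
  refine ⟨φ.symm u, φ.map_adj_iff.1 (by rwa [φ.apply_symm_apply]), ?_⟩
  simpa [φ.symm_apply_eq] using hu

variable [DecidableEq V]

theorem PebSolvable.of_one_le {D : V → ℕ} {r : V} (h : 1 ≤ D r) : PebSolvable G D r :=
  ⟨D, .refl, h⟩

theorem PebSolvable.of_pebStep {D D' : V → ℕ} {r : V} (h : PebStep G D D')
    (h' : PebSolvable G D' r) : PebSolvable G D r :=
  let ⟨D'', hD'D'', hr⟩ := h'
  ⟨D'', .head h hD'D'', hr⟩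

variable [Fintype V]

theorem sum_mul_update_update (w D : V → ℕ) {u v : V} (huv : u ≠ v) (hu : 2 ≤ D u) :
    ∑ x, w x * update (update D u (D u - 2)) v (D v + 1) x + 2 * w u
      = ∑ x, w x * D x + w v := by
  have key : ∀ x, w x * update (update D u (D u - 2)) v (D v + 1) x
      + (Pi.single u (2 * w u) : V → ℕ) x = w x * D x + (Pi.single v (w v) : V → ℕ) x := by
    intro x
    obtain ⟨d, hd⟩ := Nat.exists_eq_add_of_le' hu
    rcases eq_or_ne x u with rfl | hxu
    · simp [huv, hd]
      ring
    rcases eq_or_ne x v with rfl | hxv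
    · simp [hxu]
      ring
    simp [hxu, hxv]
  simpa [sum_add_distrib] using sum_congr (s₁ := univ) rfl fun x _ => key x

theorem IsPebblingStrategy.pebSolvable {r : V} {w : V → ℕ} (hw : IsPebblingStrategy G r w)
    {D : V → ℕ} (hD : ∑ x, w x < ∑ x, w x * D x) : PebSolvable G D r := by
  induction hN : ∑ x, D x using Nat.strong_induction_on generalizing D with
  | _ N ih =>
  by_cases hr : 1 ≤ D r
  · exact .of_one_le hr
  obtain ⟨v, hwv, hDv⟩ := exists_ne_zero_two_le_of_sum_lt_sum_mul hD
  obtain ⟨u, hvu, hu⟩ := hw v hwv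
  have hstep : PebStep G D (update (update D v (D v - 2)) u (D u + 1)) := ⟨v, u, hvu, hDv, rfl⟩
  refine .of_pebStep hstep ?_
  rcases hu with rfl | hu
  · exact .of_one_le (by simp)
  have hsize := sum_mul_update_update (fun _ => 1) D hvu.ne hDv
  have hweight := sum_mul_update_update w D hvu.ne hDv
  simp only [one_mul] at hsize
  exact ih _ (by omega) (by omega) rfl

theorem sum_mul_le_of_reflTransGen_pebStep {w : V → ℕ} (hw : ∀ u v, G.Adj u v → w v ≤ 2 * w u)
    {D D' : V → ℕ} (h : ReflTransGen (PebStep G) D D') :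
    ∑ x, w x * D' x ≤ ∑ x, w x * D x := by
  induction h with
  | refl => exact le_rfl
  | tail _ hstep ih =>
    obtain ⟨u, v, huv, hu, rfl⟩ := hstep
    have := sum_mul_update_update w _ huv.ne hu
    have := hw u v huv
    omega

theorem not_pebSolvable_of_sum_lt {f : V → ℕ} (hf : ∀ u v, G.Adj u v → f v ≤ f u + 1)
    {D : V → ℕ} {r : V} (hD : ∑ x, 2 ^ f x * D x < 2 ^ f r) : ¬ PebSolvable G D r := by
  rintro ⟨D', hDD', hr⟩
  have hmono := sum_mul_le_of_reflTransGen_pebStep (w := fun x => 2 ^ f x)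
    (fun u v huv => by rw [← pow_succ']; exact Nat.pow_le_pow_right two_pos (hf u v huv)) hDD'
  have hroot : 2 ^ f r ≤ ∑ x, 2 ^ f x * D' x :=
    (Nat.le_mul_of_pos_right _ hr).trans
      (single_le_sum (f := fun x => 2 ^ f x * D' x) (fun _ _ => Nat.zero_le _) (mem_univ r))
  omega

end Weights

theorem pebblingNumber_eq {V : Type*} [Fintype V] [DecidableEq V] {G : SimpleGraph V} {t : ℕ}
    (hsolv : ∀ D r, ∑ v, D v = t → PebSolvable G D r)
    (hunsolv : ∀ s < t, ∃ D r, ∑ v, D v = s ∧ ¬ PebSolvable G D r) :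
    pebblingNumber V G = t := by
  refine le_antisymm (Nat.sInf_le hsolv) (le_csInf ⟨t, hsolv⟩ fun s hs => ?_)
  by_contra! hlt
  obtain ⟨D, r, hD, hDr⟩ := hunsolv s hlt
  exact hDr (hs D r hD)

section Cycle

variable {n : ℕ}

theorem cycleGraph_adj_val [NeZero n] {u v : Fin n} (h : (cycleGraph n).Adj u v) :
    u.val = v.val + 1 ∨ v.val = u.val + 1 ∨
      u.val = 0 ∧ v.val + 1 = n ∨ v.val = 0 ∧ u.val + 1 = n := by
  have hn : 1 < n := by
    rcases cycleGraph_adj'.1 h with h1 | h1 <;> exact h1 ▸ Fin.is_lt _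
  have hone : ((1 : Fin n) : ℕ) = 1 := by rw [Fin.val_one', Nat.mod_eq_of_lt hn]
  have hu := u.is_lt
  have hv := v.is_lt
  rcases cycleGraph_adj'.1 h with h1 | h1 <;>
  · have := congrArg Fin.val (sub_eq_iff_eq_add'.1 (Fin.ext (h1.trans hone.symm)))
    rw [Fin.val_add_eq_ite, hone] at this
    split_ifs at this <;> omega

def cycleGraphSubRightIso [NeZero n] (r : Fin n) : cycleGraph n ≃g cycleGraph n where
  toEquiv := Equiv.subRight r
  map_rel_iff' := by simp [cycleGraph_adj']

def cycleGraphSubLeftIso [NeZero n] (r : Fin n) : cycleGraph n ≃g cycleGraph n where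
  toEquiv := Equiv.subLeft r
  map_rel_iff' := by simp [cycleGraph_adj', or_comm]

def arcWeight (m : ℕ) (j : Fin n) : ℕ :=
  if 1 ≤ j.val ∧ j.val ≤ m then 2 ^ (m - j.val) else 0

theorem isPebblingStrategy_arcWeight [NeZero n] (m : ℕ) :
    IsPebblingStrategy (cycleGraph n) 0 (arcWeight m) := by
  intro v hv
  have hv1 : 1 ≤ v.val ∧ v.val ≤ m := by
    by_contra h
    exact hv (if_neg h)
  have hone : ((1 : Fin n) : ℕ) = 1 := by
    rw [Fin.val_one', Nat.mod_eq_of_lt (by omega)]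
  have hval : (v - 1).val = v.val - 1 := by
    rw [Fin.sub_val_of_le (by rw [Fin.le_iff_val_le_val]; omega), hone]
  refine ⟨v - 1, cycleGraph_adj'.2 (.inl (by rw [sub_sub_cancel, hone])), ?_⟩
  by_cases hv2 : v.val = 1
  · exact .inl (Fin.ext (by simp [hval, hv2]))
  · right
    rw [arcWeight, arcWeight, if_pos hv1, if_pos (by omega), hval,
      show m - (v.val - 1) = m - v.val + 1 by omega, pow_succ]
    omega

theorem sum_arcWeight_lt (m : ℕ) : ∑ j : Fin n, arcWeight m j < 2 ^ m := by
  set S := univ.filter fun j : Fin n => 1 ≤ j.val ∧ j.val ≤ m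
  calc ∑ j : Fin n, arcWeight m j = ∑ j ∈ S, 2 ^ (m - j.val) := by
        rw [sum_filter]; rfl
    _ = ∑ i ∈ S.image fun j => m - j.val, 2 ^ i := by
        rw [sum_image]
        intro a ha b hb hab
        simp only [S, coe_filter, mem_univ, true_and, Set.mem_ofPred_eq] at ha hb
        exact Fin.ext (by simp only at hab; omega)
    _ < 2 ^ m := Nat.geomSum_lt le_rfl (by simp [S]; omega)

theorem two_le_arcWeight_add_arcWeight_neg {m : ℕ} [NeZero m] {j : Fin (2 * m)} (hj : j ≠ 0) :
    2 ≤ arcWeight m j + arcWeight m (-j) := by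
  have hj0 : 0 < j.val := Fin.pos_iff_ne_zero.2 hj
  have hneg : (-j).val = 2 * m - j.val := by
    rw [Fin.val_neg', Nat.mod_eq_of_lt (by omega)]
  unfold arcWeight
  rw [hneg]
  rcases lt_trichotomy j.val m with h | h | h
  · rw [if_pos (by omega)]
    have : 2 ^ 1 ≤ 2 ^ (m - j.val) := Nat.pow_le_pow_right two_pos (by omega)
    omega
  · simp [h, show 1 ≤ m by omega, show 2 * m - m = m by omega]
  · rw [if_pos (by omega : 1 ≤ 2 * m - j.val ∧ 2 * m - j.val ≤ m)]
    have : 2 ^ 1 ≤ 2 ^ (m - (2 * m - j.val)) := Nat.pow_le_pow_right two_pos (by omega)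
    omega

end Cycle

section EvenCycle

variable {k : ℕ} [NeZero k]

theorem natAbs_sub_le_of_cycleGraph_adj {u v : Fin (2 * k)} (h : (cycleGraph (2 * k)).Adj u v) :
    ((v : ℤ) - k).natAbs ≤ ((u : ℤ) - k).natAbs + 1 := by
  have := cycleGraph_adj_val h
  omega

theorem pebSolvable_cycleGraph {D : Fin (2 * k) → ℕ} (hD : ∑ v, D v = 2 ^ k) (r : Fin (2 * k)) :
    PebSolvable (cycleGraph (2 * k)) D r := by
  by_cases hr : 1 ≤ D r
  · exact .of_one_le hr
  set w₁ := arcWeight k ∘ cycleGraphSubRightIso r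
  set w₂ := arcWeight k ∘ cycleGraphSubLeftIso r
  have hw₁ : IsPebblingStrategy _ r w₁ :=
    .comp_iso _ (by simpa [cycleGraphSubRightIso] using isPebblingStrategy_arcWeight k)
  have hw₂ : IsPebblingStrategy _ r w₂ :=
    .comp_iso _ (by simpa [cycleGraphSubLeftIso] using isPebblingStrategy_arcWeight k)
  have hsum₁ : ∑ v, w₁ v < 2 ^ k :=
    (Equiv.sum_comp (cycleGraphSubRightIso r).toEquiv _).trans_lt (sum_arcWeight_lt k)
  have hsum₂ : ∑ v, w₂ v < 2 ^ k :=
    (Equiv.sum_comp (cycleGraphSubLeftIso r).toEquiv _).trans_lt (sum_arcWeight_lt k)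
  have hmass : 2 * 2 ^ k ≤ ∑ v, w₁ v * D v + ∑ v, w₂ v * D v := by
    calc 2 * 2 ^ k = ∑ v, 2 * D v := by rw [← mul_sum, hD]
      _ ≤ ∑ v, (w₁ v + w₂ v) * D v := sum_le_sum fun v _ => by
        rcases eq_or_ne v r with rfl | hv
        · simp [show D v = 0 by omega]
        · refine Nat.mul_le_mul_right _ ?_
          simpa [w₁, w₂, cycleGraphSubRightIso, cycleGraphSubLeftIso] using
            two_le_arcWeight_add_arcWeight_neg (sub_ne_zero.2 hv)
      _ = ∑ v, w₁ v * D v + ∑ v, w₂ v * D v := by simp only [add_mul, sum_add_distrib]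
  rcases (by omega : ∑ v, w₁ v < ∑ v, w₁ v * D v ∨ ∑ v, w₂ v < ∑ v, w₂ v * D v) with h | h
  exacts [hw₁.pebSolvable h, hw₂.pebSolvable h]

theorem not_pebSolvable_cycleGraph_single {a : Fin (2 * k)} (ha : a.val = k) {t : ℕ}
    (ht : t < 2 ^ k) : ¬ PebSolvable (cycleGraph (2 * k)) (Pi.single a t) 0 := by
  refine not_pebSolvable_of_sum_lt (f := fun x : Fin (2 * k) => ((x : ℤ) - k).natAbs)
    (fun u v h => natAbs_sub_le_of_cycleGraph_adj h) ?_
  simpa [Pi.single_apply, ha] using ht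

end EvenCycle

theorem pebbling_number_even_cycle (k : ℕ) (hk : 1 ≤ k) :
    pebblingNumber (Fin (2 * k)) (SimpleGraph.cycleGraph (2 * k)) = 2 ^ k := by
  have : NeZero k := ⟨by omega⟩
  refine pebblingNumber_eq (fun D r hD => pebSolvable_cycleGraph hD r) fun t ht => ?_
  exact ⟨_, 0, by simp, not_pebSolvable_cycleGraph_single (a := ⟨k, by omega⟩) rfl ht⟩
end

section
/- For k ≥ 1, the pebbling number of the odd cycle C_{2k+1} equals 2·⌊2^{k+1}/3⌋ + 1. -/
/-!
Let `r` be the root and `arc r = [r + 1, …, r + 2k]`. For a list `l`, `greedyValue D l` counts the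
pebbles that arrive at the head of `l` when pebbles are pushed greedily along `l` from its far end.
A pebbling step between two vertices that are consecutive on `l` never increases this value, and
every edge of the cycle avoiding `r` is consecutive on both `arc r` and its reverse. Hence `D` is
`r`-solvable exactly when `greedyValue D (r :: l) ≥ 1` for `l = arc r` or `l = (arc r).reverse`.

If both values vanish, write `arc r = p ++ [y, x] ++ q` with `|p| = |q| = k - 1`. Reading the
greedy value as a binary expansion gives `4 ∑ D p + 2 D y + D x < 2 ^ (k + 1)` and symmetrically
`4 ∑ D q + 2 D x + D y < 2 ^ (k + 1)`, so `3 |D| + 2 ≤ 2 ^ (k + 2)`, i.e.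
`|D| ≤ 2 ⌊2 ^ (k + 1) / 3⌋`. Conversely, up to `⌊2 ^ (k + 1) / 3⌋` pebbles on each of the two
vertices `y`, `x` opposite to `r` leave both values at zero.
-/

namespace Pebbling

open Function List Relation

theorem getElem_pair_infix {α : Type*} (l : List α) (i : ℕ) (h : i + 1 < l.length) :
    [l[i], l[i + 1]] <:+: l := by
  refine ⟨l.take i, l.drop (i + 2), ?_⟩
  conv_rhs => rw [← take_append_drop i l, drop_eq_getElem_cons (by omega),
    drop_eq_getElem_cons h]
  simp

theorem exists_eq_append_cons_cons {α : Type*} {l : List α} {n : ℕ}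
    (h : l.length = 2 * n + 2) :
    ∃ p y x q, l = p ++ y :: x :: q ∧ p.length = n ∧ q.length = n := by
  obtain ⟨y, x, q, hq⟩ : ∃ y x q, l.drop n = y :: x :: q := by
    match hd : l.drop n with
    | y :: x :: q => exact ⟨y, x, q, rfl⟩
    | [] | [_] =>
      have := congrArg length hd
      simp only [length_drop, length_nil, length_singleton] at this
      omega
  have hlen := congrArg length hq
  simp only [length_drop, length_cons] at hlen
  exact ⟨l.take n, y, x, q, by rw [← hq, take_append_drop], by rw [length_take]; omega,
    by omega⟩

section Greedy

variable {V : Type*} {D : V → ℕ}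

def greedyValue (D : V → ℕ) : List V → ℕ
  | [] => 0
  | v :: t => D v + greedyValue D t / 2

@[simp] theorem greedyValue_nil : greedyValue D [] = 0 := rfl

@[simp] theorem greedyValue_cons (v : V) (t : List V) :
    greedyValue D (v :: t) = D v + greedyValue D t / 2 := rfl

theorem greedyValue_congr {D' : V → ℕ} {l : List V} (h : ∀ v ∈ l, D' v = D v) :
    greedyValue D' l = greedyValue D l := by
  induction l with
  | nil => rfl
  | cons v t ih => simp [h v mem_cons_self, ih fun w hw => h w (mem_cons_of_mem v hw)]

theorem greedyValue_le_append (l t : List V) : greedyValue D l ≤ greedyValue D (l ++ t) := by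
  induction l with
  | nil => exact Nat.zero_le _
  | cons v l ih => simpa using Nat.div_le_div_right ih

theorem greedyValue_append_of_forall_eq_zero {p : List V} (hp : ∀ v ∈ p, D v = 0)
    (q : List V) : greedyValue D (p ++ q) = greedyValue D q / 2 ^ p.length := by
  induction p with
  | nil => simp
  | cons v p ih =>
    rw [cons_append, greedyValue_cons, hp v mem_cons_self,
      ih fun w hw => hp w (mem_cons_of_mem v hw), zero_add, Nat.div_div_eq_div_mul,
      length_cons, pow_succ]

theorem greedyValue_append_cons_cons {p q : List V} (hp : ∀ v ∈ p, D v = 0)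
    (hq : ∀ v ∈ q, D v = 0) (y x : V) :
    greedyValue D (p ++ y :: x :: q) = (D y + D x / 2) / 2 ^ p.length := by
  have hq0 : greedyValue D q = 0 := by simpa using greedyValue_append_of_forall_eq_zero hq []
  simp [greedyValue_append_of_forall_eq_zero hp, hq0]

def weightedSum (D : V → ℕ) : List V → ℕ
  | [] => 0
  | v :: t => D v * 2 ^ t.length + weightedSum D t

@[simp] theorem weightedSum_nil : weightedSum D [] = 0 := rfl

@[simp] theorem weightedSum_cons (v : V) (t : List V) :
    weightedSum D (v :: t) = D v * 2 ^ t.length + weightedSum D t := rfl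

theorem weightedSum_append (l t : List V) :
    weightedSum D (l ++ t) = weightedSum D l * 2 ^ t.length + weightedSum D t := by
  induction l with
  | nil => simp
  | cons v l ih => simp only [cons_append, weightedSum_cons, ih, length_append, pow_add]; ring

theorem sum_map_le_weightedSum (l : List V) : (l.map D).sum ≤ weightedSum D l := by
  induction l with
  | nil => simp
  | cons v l ih =>
    simp only [map_cons, sum_cons, weightedSum_cons]
    have := Nat.le_mul_of_pos_right (D v) (Nat.two_pow_pos l.length)
    omega

theorem two_mul_weightedSum_lt (l : List V) :
    2 * weightedSum D l < 2 ^ l.length * (greedyValue D l + 1) := by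
  induction l with
  | nil => simp
  | cons v l ih =>
    have hg : greedyValue D l + 1 ≤ 2 * (greedyValue D l / 2 + 1) := by omega
    calc 2 * weightedSum D (v :: l)
        = 2 * 2 ^ l.length * D v + 2 * weightedSum D l := by simp only [weightedSum_cons]; ring
      _ < 2 * 2 ^ l.length * D v + 2 ^ l.length * (greedyValue D l + 1) := by omega
      _ ≤ 2 * 2 ^ l.length * D v + 2 ^ l.length * (2 * (greedyValue D l / 2 + 1)) := by gcongr
      _ = 2 ^ (v :: l).length * (greedyValue D (v :: l) + 1) := by
        simp only [length_cons, greedyValue_cons, pow_succ]; ring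

theorem four_mul_sum_add_lt {p t : List V} {y x : V} (h : greedyValue D (p ++ y :: x :: t) ≤ 1) :
    4 * (p.map D).sum + 2 * D y + D x < 2 ^ (p.length + 2) := by
  have hg : greedyValue D (p ++ [y, x]) ≤ 1 :=
    (greedyValue_le_append _ t).trans (by simpa using h)
  have hw : 2 * weightedSum D (p ++ [y, x]) < 2 ^ (p.length + 2) * 2 := by
    calc 2 * weightedSum D (p ++ [y, x])
        < 2 ^ (p ++ [y, x]).length * (greedyValue D (p ++ [y, x]) + 1) :=
          two_mul_weightedSum_lt _
      _ ≤ 2 ^ (p.length + 2) * 2 := by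
        rw [length_append, length_cons, length_singleton]; gcongr; omega
  have hW : weightedSum D (p ++ [y, x]) = 4 * weightedSum D p + 2 * D y + D x := by
    simp [weightedSum_append]; ring
  have hp := sum_map_le_weightedSum (D := D) p
  omega

theorem three_mul_sum_add_two_le {l p q : List V} {y x : V} {n : ℕ}
    (hl : l = p ++ y :: x :: q) (hp : p.length = n) (hq : q.length = n)
    (h₁ : greedyValue D l ≤ 1) (h₂ : greedyValue D l.reverse ≤ 1) :
    3 * (l.map D).sum + 2 ≤ 2 ^ (n + 3) := by
  subst hl
  have hrev : (p ++ y :: x :: q).reverse = q.reverse ++ x :: y :: p.reverse := by simp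
  have hp' := four_mul_sum_add_lt h₁
  have hq' := four_mul_sum_add_lt (hrev ▸ h₂)
  simp only [map_reverse, sum_reverse, length_reverse, hp, hq] at hp' hq'
  simp only [map_append, map_cons, sum_append, sum_cons, pow_succ] at hp' hq' ⊢
  omega

end Greedy

section Moves

variable {V : Type*} [DecidableEq V] {G : SimpleGraph V} {D : V → ℕ}

def pebbleMove (D : V → ℕ) (u v : V) : V → ℕ :=
  update (update D u (D u - 2)) v (D v + 1)

theorem pebbleMove_apply_of_ne {u v w : V} (hu : w ≠ u) (hv : w ≠ v) :
    pebbleMove D u v w = D w := by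
  rw [pebbleMove, update_of_ne hv, update_of_ne hu]

theorem pebbleMove_apply_left {u v : V} (h : u ≠ v) : pebbleMove D u v u = D u - 2 := by
  rw [pebbleMove, update_of_ne h, update_self]

theorem pebbleMove_apply_right (u v : V) : pebbleMove D u v v = D v + 1 := by
  rw [pebbleMove, update_self]

theorem greedyValue_pebbleMove_le {l : List V} {u v : V} (hl : l.Nodup)
    (huv : [u, v] <:+: l ∨ [v, u] <:+: l) (hu : 2 ≤ D u) :
    greedyValue (pebbleMove D u v) l ≤ greedyValue D l := by
  induction l with
  | nil => simp at huv
  | cons w l ih =>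
    obtain hpre | htail : ([u, v] <+: w :: l ∨ [v, u] <+: w :: l) ∨
        ([u, v] <:+: l ∨ [v, u] <:+: l) := by
      simp only [infix_cons_iff] at huv; tauto
    · rcases hpre with ⟨t, ht⟩ | ⟨t, ht⟩ <;>
        simp only [cons_append, nil_append, cons.injEq] at ht <;>
        obtain ⟨rfl, rfl⟩ := ht <;>
        simp only [nodup_cons, mem_cons, not_or] at hl
      · have ht : greedyValue (pebbleMove D u v) t = greedyValue D t := greedyValue_congr
          fun w hw => pebbleMove_apply_of_ne (fun h => hl.1.2 (h ▸ hw)) (fun h => hl.2.1 (h ▸ hw))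
        simp only [greedyValue_cons, ht, pebbleMove_apply_left hl.1.1, pebbleMove_apply_right]
        omega
      · have ht : greedyValue (pebbleMove D u v) t = greedyValue D t := greedyValue_congr
          fun w hw => pebbleMove_apply_of_ne (fun h => hl.2.1 (h ▸ hw)) (fun h => hl.1.2 (h ▸ hw))
        simp only [greedyValue_cons, ht, pebbleMove_apply_left (Ne.symm hl.1.1),
          pebbleMove_apply_right]
        omega
    · have hmem : u ∈ l ∧ v ∈ l := by
        rcases htail with h | h <;> exact ⟨h.subset (by simp), h.subset (by simp)⟩
      have hwl := (nodup_cons.mp hl).1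
      have hu : w ≠ u := fun h => hwl (h ▸ hmem.1)
      have hv : w ≠ v := fun h => hwl (h ▸ hmem.2)
      simpa [pebbleMove_apply_of_ne hu hv] using
        Nat.div_le_div_right (c := 2) (ih (nodup_cons.mp hl).2 htail)

theorem greedyValue_single_add_single {p q : List V} {y x : V} (h : (p ++ y :: x :: q).Nodup)
    (a b : ℕ) :
    greedyValue (Pi.single y a + Pi.single x b) (p ++ y :: x :: q) = (a + b / 2) / 2 ^ p.length := by
  have hp := disjoint_of_nodup_append h
  have hyxq := nodup_cons.1 (h.of_append_right)
  have hxq := (nodup_cons.1 hyxq.2).1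
  have hyx : y ≠ x := fun h => hyxq.1 (h ▸ mem_cons_self)
  rw [greedyValue_append_cons_cons _ _ y x]
  · simp [hyx, hyx.symm]
  · intro v hv
    have hv' : v ∉ y :: x :: q := hp hv
    simp only [mem_cons, not_or] at hv'
    simp [hv'.1, hv'.2.1]
  · intro v hv
    have hvy : v ≠ y := fun h => hyxq.1 (h ▸ mem_cons_of_mem x hv)
    have hvx : v ≠ x := fun h => hxq (h ▸ hv)
    simp [hvy, hvx]

theorem exists_reflTransGen_transfer {u v : V} (huv : G.Adj u v) (s : ℕ) (D : V → ℕ)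
    (hs : 2 * s ≤ D u) :
    ∃ E, ReflTransGen (PebStep G) D E ∧ E v = D v + s ∧ ∀ w, w ≠ u → w ≠ v → E w = D w := by
  induction s generalizing D with
  | zero => exact ⟨D, .refl, rfl, fun _ _ _ => rfl⟩
  | succ s ih =>
    obtain ⟨E, hE, hEv, hEw⟩ := ih (pebbleMove D u v)
      (by rw [pebbleMove_apply_left huv.ne]; omega)
    refine ⟨E, .head ⟨u, v, huv, by omega, rfl⟩ hE, ?_, fun w hu hv => ?_⟩
    · rw [hEv, pebbleMove_apply_right]; ring
    · rw [hEw w hu hv, pebbleMove_apply_of_ne hu hv]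

theorem exists_reflTransGen_greedyValue_le {v : V} {t : List V} (hc : (v :: t).IsChain G.Adj)
    (hnd : (v :: t).Nodup) (D : V → ℕ) :
    ∃ E, ReflTransGen (PebStep G) D E ∧ greedyValue D (v :: t) ≤ E v ∧
      ∀ w ∉ v :: t, E w = D w := by
  induction t generalizing v with
  | nil => exact ⟨D, .refl, by simp, fun _ _ => rfl⟩
  | cons x t ih =>
    rw [isChain_cons_cons] at hc
    obtain ⟨hvx, hxt⟩ := nodup_cons.mp hnd
    obtain ⟨E₁, hE₁, hxE₁, hE₁w⟩ := ih hc.2 hxt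
    obtain ⟨E, hE, hEv, hEw⟩ := exists_reflTransGen_transfer hc.1.symm
      (greedyValue D (x :: t) / 2) E₁ (by omega)
    refine ⟨E, hE₁.trans hE, ?_, fun w hw => ?_⟩
    · rw [hEv, hE₁w v hvx, greedyValue_cons]
    · simp only [mem_cons, not_or] at hw
      rw [hEw w hw.2.1 hw.1, hE₁w w (by simp [hw.2.1, hw.2.2])]

theorem pebSolvable_of_one_le_greedyValue {r : V} {l : List V} (hc : (r :: l).IsChain G.Adj)
    (hnd : (r :: l).Nodup) (h : 1 ≤ greedyValue D (r :: l)) : PebSolvable G D r :=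
  let ⟨E, hE, hrE, _⟩ := exists_reflTransGen_greedyValue_le hc hnd D
  ⟨E, hE, h.trans hrE⟩

end Moves

theorem pebblingNumber_eq_of_forall {V : Type*} [Fintype V] [DecidableEq V] {G : SimpleGraph V}
    {N : ℕ} (hN : ∀ (D : V → ℕ) (r : V), ∑ v, D v = N → PebSolvable G D r)
    (hlt : ∀ t < N, ∃ (D : V → ℕ) (r : V), ∑ v, D v = t ∧ ¬ PebSolvable G D r) :
    pebblingNumber V G = N := by
  refine le_antisymm (Nat.sInf_le hN) (le_csInf ⟨N, hN⟩ fun t ht => not_lt.1 fun htN => ?_)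
  obtain ⟨D, r, hD, hns⟩ := hlt t htN
  exact hns (ht D r hD)

section Cycle

open SimpleGraph

variable {m : ℕ}

theorem cycleGraph_adj_iff (hm : 1 ≤ m) {u v : Fin (m + 1)} :
    (cycleGraph (m + 1)).Adj u v ↔ v = u + 1 ∨ u = v + 1 := by
  have h10 : (1 : Fin (m + 1)) ≠ 0 := by rw [Ne, Fin.one_eq_zero_iff]; omega
  rw [cycleGraph_eq_circulantGraph, circulantGraph_adj]
  simp only [Set.mem_singleton_iff, sub_eq_iff_eq_add']
  refine ⟨fun h => h.2.symm, fun h => ⟨?_, h.symm⟩⟩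
  rcases h with rfl | rfl
  · simpa [eq_comm] using h10
  · simpa using h10

def arc (r : Fin (m + 1)) : List (Fin (m + 1)) :=
  (finRange m).map fun i => r + i.succ

theorem length_arc (r : Fin (m + 1)) : (arc r).length = m := by simp [arc]

theorem cons_arc (r : Fin (m + 1)) : r :: arc r = (finRange (m + 1)).map (r + ·) := by
  simp [arc, finRange_succ, Function.comp_def]

theorem arc_append_singleton (r : Fin (m + 1)) :
    arc r ++ [r] = (finRange (m + 1)).map fun a => r + (a + 1) := by
  simp [arc, finRange_succ_last, Function.comp_def, Fin.coeSucc_eq_succ]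

theorem nodup_cons_arc (r : Fin (m + 1)) : (r :: arc r).Nodup := by
  rw [cons_arc]
  exact (nodup_finRange _).map (add_right_injective r)

theorem nodup_cons_reverse_arc (r : Fin (m + 1)) : (r :: (arc r).reverse).Nodup := by
  have h := nodup_cons.1 (nodup_cons_arc r)
  exact nodup_cons.2 ⟨by simpa using h.1, nodup_reverse.2 h.2⟩

theorem sum_eq_add_sum_map_arc (D : Fin (m + 1) → ℕ) (r : Fin (m + 1)) :
    ∑ v, D v = D r + ((arc r).map D).sum := by
  calc ∑ v, D v = ∑ a, D (r + a) := (Equiv.sum_comp (Equiv.addLeft r) D).symm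
    _ = ((r :: arc r).map D).sum := by rw [Fin.sum_univ_def, cons_arc, List.map_map]; rfl
    _ = D r + ((arc r).map D).sum := sum_cons

theorem isChain_finRange_add_one : (finRange (m + 1)).IsChain fun a b => b = a + 1 := by
  rw [isChain_iff_getElem]
  intro i hi
  simp only [length_finRange] at hi
  ext
  simp [Fin.val_add, Nat.mod_eq_of_lt hi]

theorem isChain_cons_arc_add_one (r : Fin (m + 1)) :
    (r :: arc r).IsChain fun a b => b = a + 1 := by
  rw [cons_arc, isChain_map]
  exact isChain_finRange_add_one.imp fun a b h => by rw [h, ← add_assoc]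

theorem isChain_arc_append_add_one (r : Fin (m + 1)) :
    (arc r ++ [r]).IsChain fun a b => b = a + 1 := by
  rw [arc_append_singleton, isChain_map]
  exact isChain_finRange_add_one.imp fun a b h => by rw [h, ← add_assoc]

theorem isChain_cons_arc (hm : 1 ≤ m) (r : Fin (m + 1)) :
    (r :: arc r).IsChain (cycleGraph (m + 1)).Adj :=
  (isChain_cons_arc_add_one r).imp fun _ _ h => (cycleGraph_adj_iff hm).2 (Or.inl h)

theorem isChain_cons_reverse_arc (hm : 1 ≤ m) (r : Fin (m + 1)) :
    (r :: (arc r).reverse).IsChain (cycleGraph (m + 1)).Adj := by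
  have h : r :: (arc r).reverse = (arc r ++ [r]).reverse := by simp
  rw [h, isChain_reverse]
  exact (isChain_arc_append_add_one r).imp fun _ _ h => (cycleGraph_adj_iff hm).2 (Or.inr h)

theorem exists_arc_eq_cons_of_adj (hm : 1 ≤ m) {r u : Fin (m + 1)}
    (h : (cycleGraph (m + 1)).Adj u r) : ∃ t, arc r = u :: t ∨ (arc r).reverse = u :: t := by
  have hne : arc r ≠ [] := by rw [← length_pos_iff, length_arc]; omega
  rcases (cycleGraph_adj_iff hm).1 h with hr | hu
  · obtain ⟨t, w, ht⟩ := (eq_nil_or_concat' (arc r)).resolve_left hne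
    have hw := isChain_arc_append_add_one r
    rw [ht, append_assoc, singleton_append, isChain_append] at hw
    have hwu : w = u := add_right_cancel ((isChain_pair.1 hw.2.1).symm.trans hr)
    exact ⟨t.reverse, Or.inr (by simp [ht, hwu])⟩
  · obtain ⟨w, t, ht⟩ := exists_cons_of_ne_nil hne
    have hw := isChain_cons_arc_add_one r
    rw [ht, isChain_cons_cons] at hw
    exact ⟨t, Or.inl (by rw [ht, hw.1, hu])⟩

theorem pair_add_one_infix_arc {r u : Fin (m + 1)} (hu : u ≠ r) (hu₁ : u + 1 ≠ r) :
    [u, u + 1] <:+: arc r := by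
  set a := u - r
  have hua : u = r + a := by simp [a]
  have ha : a ≠ 0 := sub_ne_zero.2 hu
  have ha₁ : a.val + 1 < m + 1 := by
    have : a ≠ Fin.last m := by
      rintro h
      exact hu₁ (by rw [hua, add_assoc, h, Fin.last_add_one, add_zero])
    have := Fin.val_lt_last this
    omega
  have hpair : [a, a + 1] <:+: finRange (m + 1) := by
    have h := getElem_pair_infix (finRange (m + 1)) a.val (by simpa using ha₁)
    have h₁ : (finRange (m + 1))[a.val + 1]'(by simpa using ha₁) = a + 1 := by
      ext; simp [Fin.val_add, Nat.mod_eq_of_lt ha₁]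
    simpa [h₁] using h
  have := hpair.map (r + ·)
  rw [← cons_arc, map_cons, map_cons, map_nil, ← hua, ← add_assoc, ← hua, infix_cons_iff,
    cons_prefix_cons] at this
  exact this.resolve_left fun h => hu h.1

theorem pair_infix_arc (hm : 1 ≤ m) {r u v : Fin (m + 1)} (h : (cycleGraph (m + 1)).Adj u v)
    (hu : u ≠ r) (hv : v ≠ r) : [u, v] <:+: arc r ∨ [v, u] <:+: arc r := by
  rcases (cycleGraph_adj_iff hm).1 h with rfl | rfl
  · exact Or.inl (pair_add_one_infix_arc hu hv)
  · exact Or.inr (pair_add_one_infix_arc hv hu)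

theorem greedyValue_arcs_eq_zero_of_pebStep (hm : 1 ≤ m) {D D' : Fin (m + 1) → ℕ}
    {r : Fin (m + 1)} (hstep : PebStep (cycleGraph (m + 1)) D D')
    (h₁ : greedyValue D (r :: arc r) = 0) (h₂ : greedyValue D (r :: (arc r).reverse) = 0) :
    greedyValue D' (r :: arc r) = 0 ∧ greedyValue D' (r :: (arc r).reverse) = 0 := by
  obtain ⟨u, v, huv, hu, rfl⟩ := hstep
  simp only [greedyValue_cons, Nat.add_eq_zero_iff] at h₁ h₂
  have hur : u ≠ r := by rintro rfl; omega
  have hvr : v ≠ r := by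
    rintro rfl
    obtain ⟨t, ht | ht⟩ := exists_arc_eq_cons_of_adj hm huv
    · rw [ht, greedyValue_cons] at h₁; omega
    · rw [ht, greedyValue_cons] at h₂; omega
  have hinf := pair_infix_arc hm huv hur hvr
  constructor
  · refine Nat.eq_zero_of_le_zero ?_
    calc greedyValue (pebbleMove D u v) (r :: arc r) ≤ greedyValue D (r :: arc r) :=
          greedyValue_pebbleMove_le (nodup_cons_arc r) (hinf.imp infix_cons infix_cons) hu
      _ = 0 := by simp [h₁.1, h₁.2]
  · refine Nat.eq_zero_of_le_zero ?_
    calc greedyValue (pebbleMove D u v) (r :: (arc r).reverse)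
          ≤ greedyValue D (r :: (arc r).reverse) :=
          greedyValue_pebbleMove_le (nodup_cons_reverse_arc r)
            (hinf.symm.imp (infix_cons ·.reverse) (infix_cons ·.reverse)) hu
      _ = 0 := by simp [h₂.1, h₂.2]

theorem pebSolvable_cycleGraph_iff (hm : 1 ≤ m) (D : Fin (m + 1) → ℕ) (r : Fin (m + 1)) :
    PebSolvable (cycleGraph (m + 1)) D r ↔
      1 ≤ greedyValue D (r :: arc r) ∨ 1 ≤ greedyValue D (r :: (arc r).reverse) := by
  refine ⟨fun ⟨D', hD', hr⟩ => ?_, fun h => h.elim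
    (pebSolvable_of_one_le_greedyValue (isChain_cons_arc hm r) (nodup_cons_arc r))
    (pebSolvable_of_one_le_greedyValue (isChain_cons_reverse_arc hm r)
      (nodup_cons_reverse_arc r))⟩
  by_contra! h
  have hinv := hD'.rec (motive := fun E _ =>
      greedyValue E (r :: arc r) = 0 ∧ greedyValue E (r :: (arc r).reverse) = 0)
    (by omega) fun _ hstep ih => greedyValue_arcs_eq_zero_of_pebStep hm hstep ih.1 ih.2
  have := hinv.1
  rw [greedyValue_cons] at this
  omega

theorem pebSolvable_cycleGraph_of_sum_eq {k : ℕ} (hk : 1 ≤ k) (D : Fin (2 * k + 1) → ℕ)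
    (r : Fin (2 * k + 1)) (hD : ∑ v, D v = 2 * (2 ^ (k + 1) / 3) + 1) :
    PebSolvable (cycleGraph (2 * k + 1)) D r := by
  by_contra hns
  simp only [pebSolvable_cycleGraph_iff (by omega : 1 ≤ 2 * k), greedyValue_cons, not_or,
    not_le, Nat.lt_one_iff, Nat.add_eq_zero_iff, Nat.div_eq_zero_iff] at hns
  obtain ⟨p, y, x, q, hl, hp, hq⟩ :=
    exists_eq_append_cons_cons (l := arc r) (n := k - 1) (by rw [length_arc]; omega)
  have h3 := three_mul_sum_add_two_le (D := D) hl hp hq (by omega) (by omega)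
  rw [sum_eq_add_sum_map_arc D r] at hD
  rw [show k - 1 + 3 = k + 1 + 1 by omega, pow_succ 2 (k + 1)] at h3
  have := Nat.div_add_mod (2 ^ (k + 1)) 3
  have := Nat.mod_lt (2 ^ (k + 1)) three_pos
  omega

theorem exists_not_pebSolvable_cycleGraph {k : ℕ} (hk : 1 ≤ k) {t : ℕ}
    (ht : t ≤ 2 * (2 ^ (k + 1) / 3)) :
    ∃ D : Fin (2 * k + 1) → ℕ, ∑ v, D v = t ∧ ¬ PebSolvable (cycleGraph (2 * k + 1)) D 0 := by
  obtain ⟨p, y, x, q, hl, hp, hq⟩ :=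
    exists_eq_append_cons_cons (l := arc (0 : Fin (2 * k + 1))) (n := k - 1)
      (by rw [length_arc]; omega)
  have hnd := nodup_cons_arc (0 : Fin (2 * k + 1))
  rw [hl] at hnd
  obtain ⟨h0, hnd⟩ := nodup_cons.1 hnd
  have hy : y ≠ 0 := fun h => h0 (by simp [← h])
  have hx : x ≠ 0 := fun h => h0 (by simp [← h])
  have hrev : (p ++ y :: x :: q).reverse = q.reverse ++ x :: y :: p.reverse := by simp
  have hnd' : (q.reverse ++ x :: y :: p.reverse).Nodup := by rw [← hrev]; exact nodup_reverse.2 hnd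
  set α := min t (2 ^ (k + 1) / 3)
  set β := t - α
  refine ⟨Pi.single y α + Pi.single x β, ?_, ?_⟩
  · simp only [Pi.add_apply, Finset.sum_add_distrib, Finset.sum_pi_single', Finset.mem_univ,
      if_true]
    omega
  · rw [pebSolvable_cycleGraph_iff (by omega), hl, hrev, greedyValue_cons, greedyValue_cons,
      greedyValue_single_add_single hnd, add_comm (Pi.single y α : Fin (2 * k + 1) → ℕ),
      greedyValue_single_add_single hnd']
    simp only [Pi.add_apply, Pi.single_eq_of_ne hy.symm, Pi.single_eq_of_ne hx.symm,
      length_reverse, hp, hq, Nat.div_div_eq_div_mul, not_or, not_le, Nat.lt_one_iff,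
      Nat.add_eq_zero_iff, Nat.div_eq_zero_iff, true_and]
    have h3 : ¬ 3 ∣ 2 ^ (k + 1) := fun h => by
      have := Nat.Prime.dvd_of_dvd_pow Nat.prime_three h; omega
    have := Nat.div_add_mod (2 ^ (k + 1)) 3
    have hpow : 2 ^ (k + 1) = 2 ^ (k - 1) * 2 * 2 := by
      rw [← pow_succ, ← pow_succ]; congr 1; omega
    omega

end Cycle

end Pebbling

theorem pebbling_number_odd_cycle (k : ℕ) (hk : 1 ≤ k) :
    pebblingNumber (Fin (2 * k + 1)) (SimpleGraph.cycleGraph (2 * k + 1)) =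
      2 * (2 ^ (k + 1) / 3) + 1 := by
  refine Pebbling.pebblingNumber_eq_of_forall (Pebbling.pebSolvable_cycleGraph_of_sum_eq hk)
    fun t ht => ?_
  obtain ⟨D, hD⟩ := Pebbling.exists_not_pebSolvable_cycleGraph hk (Nat.le_of_lt_succ ht)
  exact ⟨D, 0, hD⟩
end

section
/- If G has the 2-pebbling property, then f(G □ K_m) ≤ m·f(G). -/
/-- The size of the support of a distribution. -/
def supportSize {V : Type*} [Fintype V] (D : V → ℕ) : ℕ :=
  (Finset.univ.filter fun v => 0 < D v).card

/-- `G` has the 2-pebbling property. -/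
def TwoPebbling (V : Type*) [Fintype V] [DecidableEq V] (G : SimpleGraph V) : Prop :=
  ∀ D : V → ℕ, ∀ r : V, 2 * pebblingNumber V G - supportSize D + 1 ≤ ∑ v, D v →
    ∃ D' : V → ℕ, Relation.ReflTransGen (PebStep G) D D' ∧ 2 ≤ D' r

/-!
Let `f = f(G)` and put `m·f` pebbles on `G □ K_m` with root `(r, j)`. If some copy `G × {i}`
with `i ≠ j` holds enough pebbles for the 2-pebbling property, two pebbles reach `(r, i)` and one
crosses to `(r, j)`. Otherwise every other copy has `|Dᵢ| + q(Dᵢ) ≤ 2f`, so moving half of each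
of its piles straight into copy `j` gains at least `(|Dᵢ| - q(Dᵢ))/2 ≥ |Dᵢ| - f` pebbles there;
copy `j` then holds at least `m·f - (m-1)·f = f` pebbles and is solvable inside `G`.
-/
open Finset Relation

lemma Fintype.exists_le_sum_eq_of_le_sum {ι : Type*} [Fintype ι] [DecidableEq ι] {d : ι → ℕ}
    {n : ℕ} (h : n ≤ ∑ i, d i) : ∃ d₀ ≤ d, ∑ i, d₀ i = n := by
  induction n with
  | zero => exact ⟨0, fun _ => Nat.zero_le _, by simp⟩
  | succ n ih =>
    obtain ⟨d₀, hd₀, rfl⟩ := ih (by omega)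
    obtain ⟨i, -, hi⟩ := exists_lt_of_sum_lt (s := univ) (by omega : ∑ i, d₀ i < ∑ i, d i)
    refine ⟨d₀ + Pi.single i 1, fun k => ?_, by simp [sum_add_distrib]⟩
    rcases eq_or_ne k i with rfl | hk
    · simpa using hi
    · simpa [hk] using hd₀ k

section Distribution

variable {V : Type*} [Fintype V]

lemma supportSize_le_sum (d : V → ℕ) : supportSize d ≤ ∑ v, d v := by
  rw [supportSize, card_filter]
  exact sum_le_sum fun v _ => by split_ifs <;> omega

lemma sum_le_two_mul_sum_div_two_add_supportSize (d : V → ℕ) :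
    ∑ v, d v ≤ 2 * ∑ v, d v / 2 + supportSize d := by
  rw [supportSize, card_filter, mul_sum, ← sum_add_distrib]
  exact sum_le_sum fun v _ => by split_ifs <;> omega

lemma sum_le_sum_div_two_add_of_lt_two_mul_sub_supportSize {f : ℕ} {d : V → ℕ}
    (h : ∑ v, d v < 2 * f - supportSize d + 1) : ∑ v, d v ≤ ∑ v, d v / 2 + f := by
  have := supportSize_le_sum d
  have := sum_le_two_mul_sum_div_two_add_supportSize d
  omega

end Distribution

section Pebbling

variable {V : Type*} [DecidableEq V] {G : SimpleGraph V}

lemma PebStep.exists_le_of_le {d d' e : V → ℕ} (h : PebStep G d d') (hde : d ≤ e) :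
    ∃ e', PebStep G e e' ∧ d' ≤ e' := by
  obtain ⟨u, v, huv, hu, rfl⟩ := h
  refine ⟨_, ⟨u, v, huv, hu.trans (hde u), rfl⟩, fun w => ?_⟩
  have hdw : d w ≤ e w := hde w
  have hdv : d v ≤ e v := hde v
  have hdu : d u ≤ e u := hde u
  simp only [Function.update_apply]
  split_ifs <;> subst_vars <;> omega

lemma exists_reflTransGen_pebStep_le_of_le {d d' e : V → ℕ} (hde : d ≤ e)
    (h : ReflTransGen (PebStep G) d d') : ∃ e', ReflTransGen (PebStep G) e e' ∧ d' ≤ e' := by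
  induction h with
  | refl => exact ⟨e, .refl, hde⟩
  | tail _ hstep ih =>
    obtain ⟨e₁, he₁, hle⟩ := ih
    obtain ⟨e₂, he₂, hle₂⟩ := hstep.exists_le_of_le hle
    exact ⟨e₂, he₁.tail he₂, hle₂⟩

lemma PebSolvable.mono {D E : V → ℕ} {r : V} (h : PebSolvable G D r) (hDE : D ≤ E) :
    PebSolvable G E r := by
  obtain ⟨D', hD', hr⟩ := h
  obtain ⟨E', hE', hle⟩ := exists_reflTransGen_pebStep_le_of_le hDE hD'
  exact ⟨E', hE', hr.trans (hle r)⟩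

lemma PebSolvable.of_reflTransGen {D E : V → ℕ} {r : V} (h : PebSolvable G E r)
    (hDE : ReflTransGen (PebStep G) D E) : PebSolvable G D r :=
  let ⟨E', hE', hr⟩ := h
  ⟨E', hDE.trans hE', hr⟩

lemma exists_reflTransGen_pebStep_transfer {u v : V} (huv : G.Adj u v) (k : ℕ) {D : V → ℕ}
    (hk : 2 * k ≤ D u) : ∃ D', ReflTransGen (PebStep G) D D' ∧
      ∀ w ≠ u, D' w = D w + if w = v then k else 0 := by
  induction k generalizing D with
  | zero => exact ⟨D, .refl, by simp⟩
  | succ k ih =>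
    set D₁ := Function.update (Function.update D u (D u - 2)) v (D v + 1)
    have hD₁u : D₁ u = D u - 2 := by simp [D₁, huv.ne]
    obtain ⟨D', hD', hw⟩ := ih (D := D₁) (by omega)
    refine ⟨D', .head ⟨u, v, huv, by omega, rfl⟩ hD', fun w hwu => ?_⟩
    rw [hw w hwu]
    simp only [D₁, Function.update_apply, if_neg hwu]
    split_ifs <;> subst_vars <;> omega

lemma exists_reflTransGen_pebStep_sum_add_sum_div_two_le {T : Finset V} {t : V → V}
    {s : Finset V} (hsT : Disjoint s T) (ht : ∀ u ∈ s, t u ∈ T ∧ G.Adj u (t u)) (D : V → ℕ) :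
    ∃ D', ReflTransGen (PebStep G) D D' ∧ ∑ w ∈ T, D w + ∑ u ∈ s, D u / 2 ≤ ∑ w ∈ T, D' w := by
  induction s using Finset.induction_on generalizing D with
  | empty => exact ⟨D, .refl, by simp⟩
  | @insert c s hcs ih =>
    obtain ⟨htc, hadj⟩ := ht c (mem_insert_self c s)
    have hcT : c ∉ T := disjoint_left.mp hsT (mem_insert_self c s)
    obtain ⟨D₁, hD₁, hD₁w⟩ :=
      exists_reflTransGen_pebStep_transfer hadj (D c / 2) (D := D) (by omega)
    obtain ⟨D', hD', hle⟩ := ih (disjoint_of_subset_left (subset_insert c s) hsT)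
      (fun u hu => ht u (mem_insert_of_mem hu)) D₁
    have hT : ∑ w ∈ T, D₁ w = ∑ w ∈ T, D w + D c / 2 := by
      rw [sum_congr rfl fun w hw => hD₁w w (ne_of_mem_of_not_mem hw hcT), sum_add_distrib,
        sum_ite_eq' T (t c), if_pos htc]
    have hs : ∑ u ∈ s, D₁ u / 2 = ∑ u ∈ s, D u / 2 := by
      refine sum_congr rfl fun u hu => ?_
      rw [hD₁w u (ne_of_mem_of_not_mem hu hcs),
        if_neg fun h : u = t c => disjoint_left.mp hsT (mem_insert_of_mem hu) (h ▸ htc), add_zero]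
    refine ⟨D', hD₁.trans hD', ?_⟩
    rw [sum_insert hcs]
    omega

end Pebbling

section BoxProd

variable {V W : Type*} [DecidableEq V] [DecidableEq W] {G : SimpleGraph V} {H : SimpleGraph W}

lemma exists_reflTransGen_boxProd_of_reflTransGen (j : W) {d d' : V → ℕ}
    (h : ReflTransGen (PebStep G) d d') {E : V × W → ℕ} (hE : ∀ v, E (v, j) = d v) :
    ∃ E', ReflTransGen (PebStep (G □ H)) E E' ∧ ∀ v, E' (v, j) = d' v := by
  induction h with
  | refl => exact ⟨E, .refl, hE⟩
  | tail _ hstep ih =>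
    obtain ⟨E₁, hE₁, hE₁j⟩ := ih
    obtain ⟨u, w, huw, hu, rfl⟩ := hstep
    refine ⟨_, hE₁.tail ⟨(u, j), (w, j), SimpleGraph.boxProd_adj_left.mpr huw,
      (hE₁j u).symm ▸ hu, rfl⟩, fun v => ?_⟩
    simp [Function.update_apply, hE₁j]

lemma PebSolvable.boxProd {D : V × W → ℕ} {r : V} {j : W}
    (h : PebSolvable G (fun v => D (v, j)) r) : PebSolvable (G □ H) D (r, j) := by
  obtain ⟨d', hd', hr⟩ := h
  obtain ⟨E', hE', hE'j⟩ := exists_reflTransGen_boxProd_of_reflTransGen (H := H) j hd' fun _ => rfl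
  exact ⟨E', hE', hE'j r ▸ hr⟩

lemma pebSolvable_boxProd_of_two_le {D : V × W → ℕ} {r : V} {i j : W} (hij : H.Adj i j)
    {d' : V → ℕ} (hd' : ReflTransGen (PebStep G) (fun v => D (v, i)) d') (hr : 2 ≤ d' r) :
    PebSolvable (G □ H) D (r, j) := by
  obtain ⟨E', hE', hE'i⟩ := exists_reflTransGen_boxProd_of_reflTransGen (H := H) i hd' fun _ => rfl
  have hadj : (G □ H).Adj (r, i) (r, j) := SimpleGraph.boxProd_adj_right.mpr hij
  obtain ⟨E'', hE'', hE''r⟩ :=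
    exists_reflTransGen_pebStep_transfer hadj 1 (D := E') (by rw [hE'i]; omega)
  refine ⟨E'', hE'.trans hE'', ?_⟩
  rw [hE''r (r, j) (by simpa using hij.ne.symm), if_pos rfl]
  omega

lemma exists_reflTransGen_boxProd_fiber_sum_le [Fintype V] {S : Finset W} {j : W}
    (hS : ∀ i ∈ S, H.Adj i j) (D : V × W → ℕ) :
    ∃ E, ReflTransGen (PebStep (G □ H)) D E ∧
      ∑ v, D (v, j) + ∑ i ∈ S, ∑ v, D (v, i) / 2 ≤ ∑ v, E (v, j) := by
  have hdisj : Disjoint ((univ : Finset V) ×ˢ S) (univ ×ˢ {j}) :=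
    disjoint_product.mpr <| .inr <| disjoint_singleton_right.mpr fun hj => (hS j hj).ne rfl
  obtain ⟨E, hE, hle⟩ := exists_reflTransGen_pebStep_sum_add_sum_div_two_le (G := G □ H)
    (t := fun c => (c.1, j)) hdisj
    (fun c hc => ⟨by simp,
      SimpleGraph.boxProd_adj.mpr (.inr ⟨hS c.2 (mem_product.mp hc).2, rfl⟩)⟩) D
  refine ⟨E, hE, ?_⟩
  rwa [sum_product, sum_product_right, sum_comm, sum_product] at hle

end BoxProd

section PebblingNumber

variable {V : Type*} [Fintype V] [DecidableEq V] {G : SimpleGraph V}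

lemma pebblingNumber_le {t : ℕ} (h : ∀ D : V → ℕ, ∀ r, ∑ v, D v = t → PebSolvable G D r) :
    pebblingNumber V G ≤ t :=
  Nat.sInf_le h

lemma pebSolvable_of_pebblingNumber_le_sum
    (hne : ∃ t, ∀ D : V → ℕ, ∀ r, ∑ v, D v = t → PebSolvable G D r) {D : V → ℕ} (r : V)
    (hD : pebblingNumber V G ≤ ∑ v, D v) : PebSolvable G D r := by
  obtain ⟨D₀, hD₀, hsum⟩ := Fintype.exists_le_sum_eq_of_le_sum hD
  exact (Nat.sInf_mem hne D₀ r hsum).mono hD₀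

lemma TwoPebbling.pebSolvable (hG : TwoPebbling V G) {D : V → ℕ} (r : V)
    (hD : pebblingNumber V G ≤ ∑ v, D v) : PebSolvable G D r := by
  refine pebSolvable_of_pebblingNumber_le_sum ⟨2 * pebblingNumber V G + 1, fun D r hD => ?_⟩ r hD
  obtain ⟨D', hD', hr⟩ := hG D r (by omega)
  exact ⟨D', hD', by omega⟩

end PebblingNumber

lemma le_add_sum_erase_of_sum_eq_card_mul {ι : Type*} [Fintype ι] [DecidableEq ι] {a b : ι → ℕ}
    {f : ℕ} (j : ι) (hsum : ∑ i, a i = Fintype.card ι * f) (hab : ∀ i ≠ j, a i ≤ b i + f) :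
    f ≤ a j + ∑ i ∈ univ.erase j, b i := by
  have hrest : ∑ i ∈ univ.erase j, a i ≤ ∑ i ∈ univ.erase j, b i + (Fintype.card ι - 1) * f := by
    calc ∑ i ∈ univ.erase j, a i ≤ ∑ i ∈ univ.erase j, (b i + f) :=
          sum_le_sum fun i hi => hab i (ne_of_mem_erase hi)
      _ = _ := by rw [sum_add_distrib, sum_const, card_erase_of_mem (mem_univ j), card_univ,
          smul_eq_mul]
  have hsplit := add_sum_erase univ a (mem_univ j)
  have hcard : 0 < Fintype.card ι := Fintype.card_pos_iff.mpr ⟨j⟩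
  rw [Nat.sub_one_mul] at hrest
  have : f ≤ Fintype.card ι * f := Nat.le_mul_of_pos_left f hcard
  omega

theorem clique_product_pebbling_general {V : Type*} [Fintype V] [DecidableEq V]
    (G : SimpleGraph V) (hG2 : TwoPebbling V G) (m : ℕ) :
    pebblingNumber (V × Fin m) (G.boxProd (SimpleGraph.completeGraph (Fin m))) ≤
      m * pebblingNumber V G := by
  refine pebblingNumber_le fun D ⟨r, j⟩ hD => ?_
  by_cases hfiber : ∃ i ≠ j,
      2 * pebblingNumber V G - supportSize (fun v => D (v, i)) + 1 ≤ ∑ v, D (v, i)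
  · obtain ⟨i, hij, hi⟩ := hfiber
    obtain ⟨d', hd', hr⟩ := hG2 _ r hi
    exact pebSolvable_boxProd_of_two_le hij hd' hr
  · push Not at hfiber
    obtain ⟨E, hDE, hE⟩ := exists_reflTransGen_boxProd_fiber_sum_le (G := G)
      (H := SimpleGraph.completeGraph (Fin m)) (S := univ.erase j)
      (fun i hi => ne_of_mem_erase hi) D
    refine (PebSolvable.boxProd (hG2.pebSolvable r ?_)).of_reflTransGen hDE
    refine le_trans (le_add_sum_erase_of_sum_eq_card_mul j ?_ fun i hij =>
      sum_le_sum_div_two_add_of_lt_two_mul_sub_supportSize (hfiber i hij)) hE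
    rw [Fintype.card_fin, ← hD, Fintype.sum_prod_type, sum_comm]

theorem clique_product_pebbling {V : Type*} [Fintype V] [DecidableEq V]
    (G : SimpleGraph V) (hG : G.Connected) (hG2 : TwoPebbling V G) (m : ℕ) :
    pebblingNumber (V × Fin m) (G.boxProd (SimpleGraph.completeGraph (Fin m))) ≤
      m * pebblingNumber V G :=
  clique_product_pebbling_general G hG2 m
end
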